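/- Let q ≥ 3 be an integer, θ = 1 − 1/q, and define on [0,θ] the functions f₁(δ) = 2θ(1 − √(1 − δ/θ)), f₂(δ) = 1 − (1 − δ/θ)·(q−1)²/(q(q−2)), and f₃(δ) = 1 − ((q−1)/(q−2))·√(1 − δ/θ). Then for all δ ∈ [0,θ]: (i) f₁(δ) ≥ f₂(δ), with equality if and only if δ = (2q−3)/(q(q−1)); (ii) f₁′(δ) − f₂′(δ) = f₃(δ)/√(1 − δ/θ) for δ ∈ [0,θ), so the affine function f₂ is the tangent line to f₁ at δ = (2q−3)/(q(q−1)); and (iii) sign(f₁(δ) − 2/q) = sign(f₂(δ) − 2/q) = sign(δ − (2q−3)/(q(q−1))). -/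

import Mathlib

open Filter Real Set

/-- `f₁(δ) = 2θ(1 - √(1 - δ/θ))` with `θ = 1 - 1/q`. -/
noncomputable def fOne (q : ℕ) (δ : ℝ) : ℝ :=
  2 * (1 - 1 / (q : ℝ)) * (1 - Real.sqrt (1 - δ / (1 - 1 / (q : ℝ))))

/-- `f₂(δ) = 1 - (1 - δ/θ)(q-1)²/(q(q-2))` with `θ = 1 - 1/q`. -/
noncomputable def fTwo (q : ℕ) (δ : ℝ) : ℝ :=
  1 - (1 - δ / (1 - 1 / (q : ℝ))) * ((q : ℝ) - 1) ^ 2 / ((q : ℝ) * ((q : ℝ) - 2))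

/-- `f₃(δ) = 1 - ((q-1)/(q-2))√(1 - δ/θ)` with `θ = 1 - 1/q`. -/
noncomputable def fThree (q : ℕ) (δ : ℝ) : ℝ :=
  1 - (((q : ℝ) - 1) / ((q : ℝ) - 2)) * Real.sqrt (1 - δ / (1 - 1 / (q : ℝ)))

/-!
Put `s = √(1 - δ/θ)`, so that `δ = θ(1 - s²)`, and let `s⋆ = (q-2)/(q-1)` be the value of `s` at
`δ⋆ = (2q-3)/(q(q-1))`. Then `f₁ - f₂ = (q-1)²/(q(q-2)) · (s⋆ - s)²`, `f₁ - 2/q = 2(q-1)/q · (s⋆ - s)`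
and `δ - δ⋆ = θ(s⋆ + s)(s⋆ - s)`, while `f₂ - 2/q` is a positive multiple of `δ - δ⋆`. So the sign of
`s⋆ - s`, which is that of `δ - δ⋆`, governs everything. The derivatives are `f₁' = 1/s` and
`f₂' = (q-1)/(q-2)`, which agree exactly at `s = s⋆`.
-/

lemma Real.sign_mul_of_pos {c : ℝ} (hc : 0 < c) (a : ℝ) : Real.sign (c * a) = Real.sign a := by
  rcases lt_trichotomy a 0 with h | rfl | h
  · rw [Real.sign_of_neg h, Real.sign_of_neg (mul_neg_of_pos_of_neg hc h)]
  · rw [mul_zero]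
  · rw [Real.sign_of_pos h, Real.sign_of_pos (mul_pos hc h)]

noncomputable def theta (q : ℕ) : ℝ := 1 - 1 / (q : ℝ)

noncomputable def deltaStar (q : ℕ) : ℝ := (2 * (q : ℝ) - 3) / ((q : ℝ) * ((q : ℝ) - 1))

section

variable {q : ℕ}

lemma three_le_cast (hq : 3 ≤ q) : (3 : ℝ) ≤ q := by exact_mod_cast hq

lemma theta_pos (hq : 3 ≤ q) : 0 < theta q := by
  have h3 := three_le_cast hq
  have : 1 / (q : ℝ) < 1 := (div_lt_one (by linarith)).2 (by linarith)
  unfold theta; linarith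

lemma sq_sqrt_one_sub_div_theta (hq : 3 ≤ q) {δ : ℝ} (hδ : δ ≤ theta q) :
    √(1 - δ / theta q) ^ 2 = 1 - δ / theta q :=
  sq_sqrt (sub_nonneg.2 ((div_le_one (theta_pos hq)).2 hδ))

lemma eq_theta_mul_one_sub_sq (hq : 3 ≤ q) {δ : ℝ} (hδ : δ ≤ theta q) :
    δ = theta q * (1 - √(1 - δ / theta q) ^ 2) := by
  rw [sq_sqrt_one_sub_div_theta hq hδ, sub_sub_cancel, mul_div_cancel₀ _ (theta_pos hq).ne']

lemma fOne_sub_fTwo (hq : 3 ≤ q) {δ : ℝ} (hδ : δ ≤ theta q) :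
    fOne q δ - fTwo q δ =
      (q - 1) ^ 2 / (q * (q - 2)) * ((q - 2) / (q - 1) - √(1 - δ / theta q)) ^ 2 := by
  have h3 := three_le_cast hq
  have hsq := sq_sqrt_one_sub_div_theta hq hδ
  unfold theta at hsq ⊢
  unfold fOne fTwo
  generalize 1 - δ / (1 - 1 / (q : ℝ)) = u at hsq ⊢
  generalize √u = s at hsq ⊢
  subst hsq
  have : (q : ℝ) - 1 ≠ 0 := by linarith
  have : (q : ℝ) - 2 ≠ 0 := by linarith
  field_simp
  ring

lemma fOne_sub_two_div (hq : 3 ≤ q) (δ : ℝ) :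
    fOne q δ - 2 / q = 2 * (q - 1) / q * ((q - 2) / (q - 1) - √(1 - δ / theta q)) := by
  have h3 := three_le_cast hq
  have : (q : ℝ) - 1 ≠ 0 := by linarith
  unfold fOne theta
  field_simp
  ring

lemma sub_deltaStar (hq : 3 ≤ q) {δ : ℝ} (hδ : δ ≤ theta q) :
    δ - deltaStar q = theta q * ((q - 2) / (q - 1) + √(1 - δ / theta q)) *
      ((q - 2) / (q - 1) - √(1 - δ / theta q)) := by
  have h3 := three_le_cast hq
  have : (q : ℝ) - 1 ≠ 0 := by linarith
  conv_lhs => rw [eq_theta_mul_one_sub_sq hq hδ]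
  unfold theta deltaStar
  field_simp
  ring

lemma fTwo_sub_two_div (hq : 3 ≤ q) (δ : ℝ) :
    fTwo q δ - 2 / q = (q - 1) ^ 2 / (q * (q - 2) * theta q) * (δ - deltaStar q) := by
  have h3 := three_le_cast hq
  have := (theta_pos hq).ne'
  have : (q : ℝ) - 1 ≠ 0 := by linarith
  have : (q : ℝ) - 2 ≠ 0 := by linarith
  unfold theta at *
  unfold fTwo deltaStar
  field_simp
  ring

lemma sign_sub_deltaStar (hq : 3 ≤ q) {δ : ℝ} (hδ : δ ≤ theta q) :
    Real.sign (δ - deltaStar q) = Real.sign ((q - 2) / (q - 1) - √(1 - δ / theta q)) := by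
  have h3 := three_le_cast hq
  have : 0 < ((q : ℝ) - 2) / (q - 1) := div_pos (by linarith) (by linarith)
  rw [sub_deltaStar hq hδ, Real.sign_mul_of_pos]
  exact mul_pos (theta_pos hq) (by positivity)

lemma deltaStar_lt_theta (hq : 3 ≤ q) : deltaStar q < theta q := by
  have h3 := three_le_cast hq
  have key : theta q - deltaStar q = ((q : ℝ) - 2) ^ 2 / (q * (q - 1)) := by
    have : (q : ℝ) - 1 ≠ 0 := by linarith
    unfold theta deltaStar
    field_simp
    ring
  have : 0 < ((q : ℝ) - 2) ^ 2 / (q * (q - 1)) := div_pos (by nlinarith) (by nlinarith)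
  linarith

lemma sqrt_one_sub_deltaStar_div_theta (hq : 3 ≤ q) :
    √(1 - deltaStar q / theta q) = (q - 2) / (q - 1) := by
  have h3 := three_le_cast hq
  have key : 1 - deltaStar q / theta q = (((q : ℝ) - 2) / (q - 1)) ^ 2 := by
    have := (theta_pos hq).ne'
    have : (q : ℝ) - 1 ≠ 0 := by linarith
    unfold theta deltaStar at *
    field_simp
    ring
  rw [key, sqrt_sq (div_nonneg (by linarith) (by linarith))]

lemma hasDerivAt_fOne (hq : 3 ≤ q) {δ : ℝ} (hδ : δ < theta q) :
    HasDerivAt (fOne q) (1 / √(1 - δ / theta q)) δ := by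
  have hu : 0 < 1 - δ / theta q := sub_pos.2 ((div_lt_one (theta_pos hq)).2 hδ)
  have hs := (hasDerivAt_sqrt hu.ne').comp δ (((hasDerivAt_id' δ).div_const (theta q)).const_sub 1)
  have h : HasDerivAt (fOne q)
      (2 * theta q * -(1 / (2 * √(1 - δ / theta q)) * -(1 / theta q))) δ :=
    (hs.const_sub 1).const_mul _
  have := (theta_pos hq).ne'
  have := (sqrt_pos.2 hu).ne'
  exact h.congr_deriv (by field_simp)

lemma hasDerivAt_fTwo (hq : 3 ≤ q) (δ : ℝ) : HasDerivAt (fTwo q) ((q - 1) / (q - 2)) δ := by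
  have h : HasDerivAt (fTwo q) (-(-(1 / theta q) * ((q : ℝ) - 1) ^ 2 / (q * (q - 2)))) δ :=
    (((((hasDerivAt_id' δ).div_const (theta q)).const_sub 1).mul_const _).div_const _).const_sub 1
  have h3 := three_le_cast hq
  have := (theta_pos hq).ne'
  have : (q : ℝ) - 1 ≠ 0 := by linarith
  have : (q : ℝ) - 2 ≠ 0 := by linarith
  refine h.congr_deriv ?_
  unfold theta at *
  field_simp

lemma fTwo_le_fOne (hq : 3 ≤ q) {δ : ℝ} (hδ : δ ≤ theta q) : fTwo q δ ≤ fOne q δ := by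
  have h3 := three_le_cast hq
  rw [← sub_nonneg, fOne_sub_fTwo hq hδ]
  exact mul_nonneg (div_nonneg (by positivity) (by nlinarith)) (sq_nonneg _)

lemma fOne_eq_fTwo_iff (hq : 3 ≤ q) {δ : ℝ} (hδ : δ ≤ theta q) :
    fOne q δ = fTwo q δ ↔ δ = deltaStar q := by
  have h3 := three_le_cast hq
  have hc : ((q : ℝ) - 1) ^ 2 / (q * (q - 2)) ≠ 0 := (div_pos (by nlinarith) (by nlinarith)).ne'
  rw [← sub_eq_zero, fOne_sub_fTwo hq hδ, mul_eq_zero, or_iff_right hc,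
    pow_eq_zero_iff two_ne_zero, ← Real.sign_eq_zero_iff, ← sign_sub_deltaStar hq hδ,
    Real.sign_eq_zero_iff, sub_eq_zero]

lemma deriv_fOne_sub_deriv_fTwo (hq : 3 ≤ q) {δ : ℝ} (hδ : δ < theta q) :
    deriv (fOne q) δ - deriv (fTwo q) δ = fThree q δ / √(1 - δ / theta q) := by
  have h3 := three_le_cast hq
  have : (q : ℝ) - 2 ≠ 0 := by linarith
  have := (sqrt_pos.2 (sub_pos.2 ((div_lt_one (theta_pos hq)).2 hδ))).ne'
  rw [(hasDerivAt_fOne hq hδ).deriv, (hasDerivAt_fTwo hq δ).deriv]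
  unfold fThree theta at *
  generalize √(1 - δ / (1 - 1 / (q : ℝ))) = s at *
  field_simp

lemma sign_fOne_sub_two_div (hq : 3 ≤ q) {δ : ℝ} (hδ : δ ≤ theta q) :
    Real.sign (fOne q δ - 2 / q) = Real.sign (δ - deltaStar q) := by
  have h3 := three_le_cast hq
  have : (0 : ℝ) < q - 1 := by linarith
  rw [fOne_sub_two_div hq, Real.sign_mul_of_pos (by positivity), sign_sub_deltaStar hq hδ]

lemma sign_fTwo_sub_two_div (hq : 3 ≤ q) (δ : ℝ) :
    Real.sign (fTwo q δ - 2 / q) = Real.sign (δ - deltaStar q) := by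
  have h3 := three_le_cast hq
  have := theta_pos hq
  rw [fTwo_sub_two_div hq, Real.sign_mul_of_pos]
  exact div_pos (by nlinarith) (mul_pos (by nlinarith) this)

end

theorem stmt13 (q : ℕ) (hq : 3 ≤ q) :
    (∀ δ ∈ Set.Icc (0 : ℝ) (1 - 1 / (q : ℝ)),
      fTwo q δ ≤ fOne q δ ∧
      (fOne q δ = fTwo q δ ↔ δ = (2 * (q : ℝ) - 3) / ((q : ℝ) * ((q : ℝ) - 1)))) ∧
    (∀ δ ∈ Set.Ico (0 : ℝ) (1 - 1 / (q : ℝ)),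
      deriv (fOne q) δ - deriv (fTwo q) δ =
        fThree q δ / Real.sqrt (1 - δ / (1 - 1 / (q : ℝ)))) ∧
    (fOne q ((2 * (q : ℝ) - 3) / ((q : ℝ) * ((q : ℝ) - 1))) =
      fTwo q ((2 * (q : ℝ) - 3) / ((q : ℝ) * ((q : ℝ) - 1))) ∧
     deriv (fOne q) ((2 * (q : ℝ) - 3) / ((q : ℝ) * ((q : ℝ) - 1))) =
      deriv (fTwo q) ((2 * (q : ℝ) - 3) / ((q : ℝ) * ((q : ℝ) - 1)))) ∧
    (∀ δ ∈ Set.Icc (0 : ℝ) (1 - 1 / (q : ℝ)),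
      Real.sign (fOne q δ - 2 / (q : ℝ)) =
        Real.sign (δ - (2 * (q : ℝ) - 3) / ((q : ℝ) * ((q : ℝ) - 1))) ∧
      Real.sign (fTwo q δ - 2 / (q : ℝ)) =
        Real.sign (δ - (2 * (q : ℝ) - 3) / ((q : ℝ) * ((q : ℝ) - 1)))) := by
  have hstar := deltaStar_lt_theta hq
  refine ⟨fun δ hδ ↦ ⟨fTwo_le_fOne hq hδ.2, fOne_eq_fTwo_iff hq hδ.2⟩,
    fun δ hδ ↦ deriv_fOne_sub_deriv_fTwo hq hδ.2, ⟨(fOne_eq_fTwo_iff hq hstar.le).2 rfl, ?_⟩,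
    fun δ hδ ↦ ⟨sign_fOne_sub_two_div hq hδ.2, sign_fTwo_sub_two_div hq δ⟩⟩
  show deriv (fOne q) (deltaStar q) = deriv (fTwo q) (deltaStar q)
  rw [(hasDerivAt_fOne hq hstar).deriv, (hasDerivAt_fTwo hq _).deriv,
    sqrt_one_sub_deltaStar_div_theta hq, one_div_div]
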